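/- arXiv:2510.22252 — 3 statements merged into one kernel-verified Lean document; each statement's English description precedes it below -/
import Mathlib

section
/- Let d ≥ 1, let f : ℝ^d → ℝ be differentiable, and let φ : ℝ^d → ℝ be a convex differentiable function. Assume: (a) ‖∇f(x)‖ → ∞ as ‖x‖ → ∞; (b) limsup_{‖x‖→∞} ‖∇f(x)‖/‖x‖ < ∞; (c) liminf_{‖x‖→∞} ⟨∇f(x), x⟩/(‖∇f(x)‖·‖x‖) > 0; and (d) the limit lim_{‖x‖→∞} ‖∇φ(x)‖/‖∇f(x)‖ exists and is strictly less than 1. Then the function U = f + φ satisfies all three of: (i) ‖∇U(x)‖ → ∞ as ‖x‖ → ∞; (ii) liminf_{‖x‖→∞} ⟨∇U(x), x⟩/(‖∇U(x)‖·‖x‖) > 0; and (iii) limsup_{‖x‖→∞} ‖∇U(x)‖/‖x‖ < ∞. -/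
/-!
Near infinity `∇φ` is at most a fixed fraction `c₁ < 1` of `∇f`, so `‖∇U‖` is squeezed between
`(1 - c₁) ‖∇f‖` and `(1 + c₁) ‖∇f‖`; this gives (i) and (iii). For (ii), monotonicity of the
gradient of the convex `φ` gives `⟪∇φ x, x⟫ ≥ ⟪∇φ 0, x⟫ ≥ -‖∇φ 0‖ ‖x‖`, which is negligible
against `⟪∇f x, x⟫ ≥ ε ‖∇f x‖ ‖x‖` once `‖∇f x‖` is large; dividing by
`‖∇U x‖ ‖x‖ ≤ (1 + c₁) ‖∇f x‖ ‖x‖` keeps the cosine above `ε / (2 (1 + c₁))`.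
-/

open Filter

/-- The filter of sets `{x : ‖x‖ ≥ R}`, `R → ∞`. -/
noncomputable def normAtTop (d : ℕ) : Filter (EuclideanSpace ℝ (Fin d)) :=
  Filter.comap (fun x => ‖x‖) Filter.atTop

open Set
open scoped Gradient RealInnerProductSpace Topology

namespace EReal

variable {α : Type*} {l : Filter α} {u : α → ℝ}

theorem limsup_coe_lt_top_iff :
    limsup (fun x => (u x : EReal)) l < ⊤ ↔ ∃ M : ℝ, ∀ᶠ x in l, u x ≤ M := by
  constructor
  · intro h
    obtain ⟨B, hlt, hB⟩ := exists_between h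
    have hB' : B ≠ ⊥ := (bot_le.trans_lt hlt).ne'
    refine ⟨B.toReal, (eventually_lt_of_limsup_lt hlt).mono fun x hx => ?_⟩
    rw [← coe_toReal hB.ne hB'] at hx
    exact_mod_cast hx.le
  · rintro ⟨M, hM⟩
    calc limsup (fun x => (u x : EReal)) l ≤ M :=
          limsup_le_of_le (by isBoundedDefault) (hM.mono fun x hx => mod_cast hx)
      _ < ⊤ := coe_lt_top M

theorem zero_lt_liminf_coe_iff :
    0 < liminf (fun x => (u x : EReal)) l ↔ ∃ ε > 0, ∀ᶠ x in l, ε ≤ u x := by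
  constructor
  · intro h
    obtain ⟨b, hb, hlt⟩ := exists_between h
    have hb' : b ≠ ⊤ := (hlt.trans_le le_top).ne
    have hb'' : b ≠ ⊥ := (bot_le.trans_lt hb).ne'
    refine ⟨b.toReal, toReal_pos hb hb', (eventually_lt_of_lt_liminf hlt).mono fun x hx => ?_⟩
    rw [← coe_toReal hb' hb''] at hx
    exact_mod_cast hx.le
  · rintro ⟨ε, hε, hεu⟩
    calc (0 : EReal) < ε := mod_cast hε
      _ ≤ liminf (fun x => (u x : EReal)) l :=
          le_liminf_of_le (by isBoundedDefault) (hεu.mono fun x hx => mod_cast hx)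

end EReal

section Gradient

variable {E : Type*} [NormedAddCommGroup E] [InnerProductSpace ℝ E] [CompleteSpace E]

theorem gradient_fun_add {f g : E → ℝ} {x : E} (hf : DifferentiableAt ℝ f x)
    (hg : DifferentiableAt ℝ g x) : ∇ (fun y => f y + g y) x = ∇ f x + ∇ g x := by
  simp only [gradient, fderiv_fun_add hf hg, map_add]

theorem ConvexOn.inner_gradient_sub_le {φ : E → ℝ} (hconv : ConvexOn ℝ univ φ)
    (hφ : Differentiable ℝ φ) (x y : E) : ⟪∇ φ x, y - x⟫ ≤ ⟪∇ φ y, y - x⟫ := by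
  let L : ℝ →ᵃ[ℝ] E := AffineMap.lineMap x y
  have hderiv : ∀ t : ℝ, HasDerivAt (φ ∘ L) ⟪∇ φ (L t), y - x⟫ t := fun t => by
    rw [inner_gradient_left]
    exact (hφ (L t)).hasFDerivAt.comp_hasDerivAt t AffineMap.hasDerivAt_lineMap
  have hmono := (hconv.comp_affineMap L).monotoneOn_deriv
    (fun t _ => (hderiv t).differentiableAt) (mem_univ 0) (mem_univ 1) zero_le_one
  simpa [(hderiv _).deriv, L] using hmono

theorem ConvexOn.neg_mul_norm_le_inner_gradient {φ : E → ℝ} (hconv : ConvexOn ℝ univ φ)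
    (hφ : Differentiable ℝ φ) (x : E) : -(‖∇ φ 0‖ * ‖x‖) ≤ ⟪∇ φ x, x⟫ := by
  have := hconv.inner_gradient_sub_le hφ 0 x
  rw [sub_zero] at this
  linarith [neg_abs_le ⟪∇ φ 0, x⟫, abs_real_inner_le_norm (∇ φ 0) x]

end Gradient

section Asymptotics

variable {α E F : Type*} [SeminormedAddCommGroup F] {l : Filter α} {g h : α → F} {c : ℝ}

theorem eventually_norm_le_mul_of_tendsto_norm_div {c' : ℝ} (hg : Tendsto (‖g ·‖) l atTop)
    (hlim : Tendsto (fun x => ‖h x‖ / ‖g x‖) l (𝓝 c)) (hc : c < c') :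
    ∀ᶠ x in l, ‖h x‖ ≤ c' * ‖g x‖ := by
  filter_upwards [hlim.eventually_lt_const hc, hg.eventually_gt_atTop 0] with x hlt hpos
  exact ((div_lt_iff₀ hpos).1 hlt).le

theorem tendsto_norm_add_atTop_of_norm_le_mul (hc : c < 1) (hg : Tendsto (‖g ·‖) l atTop)
    (hle : ∀ᶠ x in l, ‖h x‖ ≤ c * ‖g x‖) : Tendsto (fun x => ‖g x + h x‖) l atTop := by
  refine tendsto_atTop_mono' l ?_ (hg.const_mul_atTop (sub_pos.2 hc))
  filter_upwards [hle] with x hx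
  linarith [norm_le_add_norm_add (g x) (h x)]

theorem eventually_norm_add_le_mul_of_norm_le_mul (hle : ∀ᶠ x in l, ‖h x‖ ≤ c * ‖g x‖) :
    ∀ᶠ x in l, ‖g x + h x‖ ≤ (1 + c) * ‖g x‖ := by
  filter_upwards [hle] with x hx
  linarith [norm_add_le (g x) (h x)]

theorem eventually_norm_div_norm_le_mul [SeminormedAddCommGroup E] {l : Filter E} {u v : E → F}
    {C M : ℝ} (hC : 0 ≤ C) (huv : ∀ᶠ x in l, ‖u x‖ ≤ C * ‖v x‖)
    (hv : ∀ᶠ x in l, ‖v x‖ / ‖x‖ ≤ M) : ∀ᶠ x in l, ‖u x‖ / ‖x‖ ≤ C * M := by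
  filter_upwards [huv, hv] with x hux hvx
  calc ‖u x‖ / ‖x‖ ≤ C * ‖v x‖ / ‖x‖ := by gcongr
    _ = C * (‖v x‖ / ‖x‖) := mul_div_assoc _ _ _
    _ ≤ C * M := by gcongr

end Asymptotics

section InnerProduct

variable {E : Type*} [NormedAddCommGroup E] [InnerProductSpace ℝ E]

theorem eventually_le_inner_add_div_norm_mul_norm {l : Filter E} {g h : E → E} {K C ε : ℝ}
    (hε : 0 < ε) (hC : 0 < C) (hg : Tendsto (‖g ·‖) l atTop)
    (hgx : ∀ᶠ x in l, ε ≤ ⟪g x, x⟫ / (‖g x‖ * ‖x‖)) (hhx : ∀ x, -(K * ‖x‖) ≤ ⟪h x, x⟫)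
    (hgh : ∀ᶠ x in l, ‖g x + h x‖ ≤ C * ‖g x‖) :
    ∀ᶠ x in l, ε / (2 * C) ≤ ⟪g x + h x, x⟫ / (‖g x + h x‖ * ‖x‖) := by
  filter_upwards [hgx, hg.eventually_ge_atTop (2 * K / ε), hgh] with x hcos hgK hu
  have hgpos : 0 < ‖g x‖ * ‖x‖ := by
    by_contra! h0
    rw [le_antisymm h0 (by positivity), div_zero] at hcos
    exact hcos.not_gt hε
  have hK : K * ‖x‖ ≤ ε / 2 * (‖g x‖ * ‖x‖) := by
    rw [div_le_iff₀ hε] at hgK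
    nlinarith [norm_nonneg x]
  have hinner : ε / 2 * (‖g x‖ * ‖x‖) ≤ ⟪g x + h x, x⟫ := by
    rw [inner_add_left]
    linarith [hhx x, (le_div_iff₀ hgpos).1 hcos]
  have hupos : 0 < ‖g x + h x‖ * ‖x‖ :=
    (by positivity : 0 < ε / 2 * (‖g x‖ * ‖x‖)).trans_le (hinner.trans (real_inner_le_norm _ _))
  rw [le_div_iff₀ hupos]
  calc ε / (2 * C) * (‖g x + h x‖ * ‖x‖) ≤ ε / (2 * C) * (C * ‖g x‖ * ‖x‖) := by gcongr
    _ = ε / 2 * (‖g x‖ * ‖x‖) := by field_simp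
    _ ≤ ⟪g x + h x, x⟫ := hinner

end InnerProduct

theorem stmt0_general (d : ℕ)
    (f φ : EuclideanSpace ℝ (Fin d) → ℝ)
    (hf : Differentiable ℝ f) (hφ : Differentiable ℝ φ)
    (hφconv : ConvexOn ℝ Set.univ φ)
    (ha : Tendsto (fun x => ‖gradient f x‖) (normAtTop d) atTop)
    (hb : Filter.limsup (fun x => ((‖gradient f x‖ / ‖x‖ : ℝ) : EReal)) (normAtTop d) < ⊤)
    (hc : (0 : EReal) < Filter.liminf
      (fun x => (((inner ℝ (gradient f x) x : ℝ) / (‖gradient f x‖ * ‖x‖) : ℝ) : EReal))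
      (normAtTop d))
    (hd' : ∃ c : ℝ, c < 1 ∧
      Tendsto (fun x => ‖gradient φ x‖ / ‖gradient f x‖) (normAtTop d) (nhds c)) :
    Tendsto (fun x => ‖gradient (fun y => f y + φ y) x‖) (normAtTop d) atTop ∧
    (0 : EReal) < Filter.liminf
      (fun x => (((inner ℝ (gradient (fun y => f y + φ y) x) x : ℝ)
        / (‖gradient (fun y => f y + φ y) x‖ * ‖x‖) : ℝ) : EReal)) (normAtTop d) ∧
    Filter.limsup (fun x => ((‖gradient (fun y => f y + φ y) x‖ / ‖x‖ : ℝ) : EReal))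
      (normAtTop d) < ⊤ := by
  obtain ⟨c, hc1, hlim⟩ := hd'
  set c₁ := max ((1 + c) / 2) 0
  have hc₁ : c₁ < 1 := max_lt (by linarith) one_pos
  have hφf : ∀ᶠ x in normAtTop d, ‖∇ φ x‖ ≤ c₁ * ‖∇ f x‖ :=
    eventually_norm_le_mul_of_tendsto_norm_div ha hlim (lt_max_of_lt_left (by linarith))
  have hUf := eventually_norm_add_le_mul_of_norm_le_mul hφf
  simp only [gradient_fun_add (hf _) (hφ _)]
  rw [EReal.limsup_coe_lt_top_iff] at hb ⊢
  rw [EReal.zero_lt_liminf_coe_iff] at hc ⊢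
  obtain ⟨M, hM⟩ := hb
  obtain ⟨ε, hε, hcos⟩ := hc
  exact ⟨tendsto_norm_add_atTop_of_norm_le_mul hc₁ ha hφf,
    ⟨_, by positivity, eventually_le_inner_add_div_norm_mul_norm hε (by positivity) ha hcos
      (hφconv.neg_mul_norm_le_inner_gradient hφ) hUf⟩,
    ⟨_, eventually_norm_div_norm_le_mul (by positivity) hUf hM⟩⟩

theorem stmt0 (d : ℕ) (hd : 1 ≤ d)
    (f φ : EuclideanSpace ℝ (Fin d) → ℝ)
    (hf : Differentiable ℝ f) (hφ : Differentiable ℝ φ)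
    (hφconv : ConvexOn ℝ Set.univ φ)
    (ha : Tendsto (fun x => ‖gradient f x‖) (normAtTop d) atTop)
    (hb : Filter.limsup (fun x => ((‖gradient f x‖ / ‖x‖ : ℝ) : EReal)) (normAtTop d) < ⊤)
    (hc : (0 : EReal) < Filter.liminf
      (fun x => (((inner ℝ (gradient f x) x : ℝ) / (‖gradient f x‖ * ‖x‖) : ℝ) : EReal))
      (normAtTop d))
    (hd' : ∃ c : ℝ, c < 1 ∧
      Tendsto (fun x => ‖gradient φ x‖ / ‖gradient f x‖) (normAtTop d) (nhds c)) :
    Tendsto (fun x => ‖gradient (fun y => f y + φ y) x‖) (normAtTop d) atTop ∧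
    (0 : EReal) < Filter.liminf
      (fun x => (((inner ℝ (gradient (fun y => f y + φ y) x) x : ℝ)
        / (‖gradient (fun y => f y + φ y) x‖ * ‖x‖) : ℝ) : EReal)) (normAtTop d) ∧
    Filter.limsup (fun x => ((‖gradient (fun y => f y + φ y) x‖ / ‖x‖ : ℝ) : EReal))
      (normAtTop d) < ⊤ :=
  stmt0_general d f φ hf hφ hφconv ha hb hc hd'
end

section
/- Let d ≥ 1, let f : ℝ^d → ℝ be differentiable, and let φ : ℝ^d → ℝ be a convex differentiable function. Assume: (a) ‖∇f(x)‖ → ∞ as ‖x‖ → ∞; (c) liminf_{‖x‖→∞} ⟨∇f(x), x⟩/(‖∇f(x)‖·‖x‖) > 0; and (d) the limit lim_{‖x‖→∞} ‖∇φ(x)‖/‖∇f(x)‖ exists and is strictly less than 1. Then liminf_{‖x‖→∞} ⟨∇f(x) + ∇φ(x), x⟩/(‖∇f(x) + ∇φ(x)‖·‖x‖) > 0. -/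
/-!
Monotonicity of the gradient of the convex `φ` gives `⟪∇φ x, x⟫ ≥ ⟪∇φ 0, x⟫ ≥ -‖∇φ 0‖ ‖x‖`,
which is eventually at most half of `e ‖∇f x‖ ‖x‖ ≤ ⟪∇f x, x⟫` because `‖∇f x‖ → ∞`. Hence
`⟪∇f x + ∇φ x, x⟫ ≥ (e / 2) ‖∇f x‖ ‖x‖`, while `‖∇f x + ∇φ x‖ ≤ (1 + C) ‖∇f x‖` once
`‖∇φ x‖ / ‖∇f x‖ ≤ C`, so the cosine stays above `e / (2 (1 + C))`.
-/

open Filter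

theorem ConvexOn.fderiv_apply_sub_le_fderiv_apply_sub {E : Type*} [NormedAddCommGroup E]
    [NormedSpace ℝ E] {s : Set E} {φ : E → ℝ} (hφ : ConvexOn ℝ s φ) {x y : E} (hx : x ∈ s)
    (hy : y ∈ s) (hφx : DifferentiableAt ℝ φ x) (hφy : DifferentiableAt ℝ φ y) :
    fderiv ℝ φ x (y - x) ≤ fderiv ℝ φ y (y - x) := by
  set line : ℝ →ᵃ[ℝ] E := AffineMap.lineMap x y
  have hline : ConvexOn ℝ (Set.Icc 0 1) (φ ∘ line) :=
    (hφ.comp_affineMap _).subset (fun _ ht ↦ hφ.1.lineMap_mem hx hy ht) (convex_Icc 0 1)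
  have hderiv₀ : HasDerivAt (φ ∘ line) (fderiv ℝ φ x (y - x)) 0 :=
    hφx.hasFDerivAt.comp_hasDerivAt_of_eq 0 AffineMap.hasDerivAt_lineMap
      (AffineMap.lineMap_apply_zero x y).symm
  have hderiv₁ : HasDerivAt (φ ∘ line) (fderiv ℝ φ y (y - x)) 1 :=
    hφy.hasFDerivAt.comp_hasDerivAt_of_eq 1 AffineMap.hasDerivAt_lineMap
      (AffineMap.lineMap_apply_one x y).symm
  have h01 : (0 : ℝ) ∈ Set.Icc 0 1 := ⟨le_rfl, zero_le_one⟩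
  have h11 : (1 : ℝ) ∈ Set.Icc 0 1 := ⟨zero_le_one, le_rfl⟩
  exact (hline.le_slope_of_hasDerivAt h01 h11 one_pos hderiv₀).trans
    (hline.slope_le_of_hasDerivAt h01 h11 one_pos hderiv₁)

theorem ConvexOn.inner_gradient_zero_le_inner_gradient {E : Type*} [NormedAddCommGroup E]
    [InnerProductSpace ℝ E] [CompleteSpace E] {φ : E → ℝ} (hφ : ConvexOn ℝ Set.univ φ)
    (hφd : Differentiable ℝ φ) (x : E) :
    inner ℝ (gradient φ 0) x ≤ inner ℝ (gradient φ x) x := by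
  simpa [inner_gradient_left] using
    hφ.fderiv_apply_sub_le_fderiv_apply_sub (Set.mem_univ 0) (Set.mem_univ x) (hφd 0) (hφd x)

theorem EReal.zero_lt_liminf_coe_iff_s3 {α : Type*} {l : Filter α} {g : α → ℝ} :
    (0 : EReal) < liminf (fun a ↦ (g a : EReal)) l ↔ ∃ δ > 0, ∀ᶠ a in l, δ ≤ g a := by
  constructor
  · intro h
    obtain ⟨δ, hδ0, hδ⟩ := EReal.exists_between_coe_real h
    exact ⟨δ, mod_cast hδ0, (eventually_lt_of_lt_liminf hδ).mono fun _ h ↦ mod_cast h.le⟩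
  · rintro ⟨δ, hδ0, hδ⟩
    exact (mod_cast hδ0 : (0 : EReal) < δ).trans_le
      (le_liminf_of_le (by isBoundedDefault) (hδ.mono fun _ ↦ mod_cast id))

theorem div_le_inner_add_div_norm_mul_norm {E : Type*} [NormedAddCommGroup E]
    [InnerProductSpace ℝ E] {u v w x : E} {e C : ℝ} (he : 0 < e)
    (hu : e ≤ inner ℝ u x / (‖u‖ * ‖x‖)) (hv : ‖v‖ / ‖u‖ ≤ C) (hw : 2 * ‖w‖ ≤ e * ‖u‖)
    (hwv : inner ℝ w x ≤ inner ℝ v x) :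
    e / (2 * (1 + C)) ≤ inner ℝ (u + v) x / (‖u + v‖ * ‖x‖) := by
  have hux : 0 < ‖u‖ * ‖x‖ := (mul_nonneg (norm_nonneg _) (norm_nonneg _)).lt_of_ne'
    fun h ↦ by rw [h, div_zero] at hu; linarith
  have hu0 : 0 < ‖u‖ := (norm_nonneg u).lt_of_ne' fun h ↦ by simp [h] at hux
  have hC : 0 ≤ C := (div_nonneg (norm_nonneg _) (norm_nonneg _)).trans hv
  have hux' : e * (‖u‖ * ‖x‖) ≤ inner ℝ u x := (le_div_iff₀ hux).1 hu
  have hwx : -(e / 2 * (‖u‖ * ‖x‖)) ≤ inner ℝ w x := by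
    have := mul_le_mul_of_nonneg_right hw (norm_nonneg x)
    linarith [(abs_le.1 (abs_real_inner_le_norm w x)).1]
  have hsum : e / 2 * (‖u‖ * ‖x‖) ≤ inner ℝ (u + v) x := by
    rw [inner_add_left]; linarith
  have hnorm : ‖u + v‖ ≤ (1 + C) * ‖u‖ :=
    (norm_add_le u v).trans (by linarith [(div_le_iff₀ hu0).1 hv])
  have hpos : 0 < ‖u + v‖ * ‖x‖ := by
    have := real_inner_le_norm (u + v) x
    nlinarith
  rw [le_div_iff₀ hpos]
  calc e / (2 * (1 + C)) * (‖u + v‖ * ‖x‖)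
      ≤ e / (2 * (1 + C)) * ((1 + C) * ‖u‖ * ‖x‖) := by gcongr
    _ = e / 2 * (‖u‖ * ‖x‖) := by field_simp
    _ ≤ inner ℝ (u + v) x := hsum

theorem stmt3_general (d : ℕ)
    (f φ : EuclideanSpace ℝ (Fin d) → ℝ)
    (hφ : Differentiable ℝ φ)
    (hφconv : ConvexOn ℝ Set.univ φ)
    (ha : Tendsto (fun x => ‖gradient f x‖) (normAtTop d) atTop)
    (hc : (0 : EReal) < Filter.liminf
      (fun x => (((inner ℝ (gradient f x) x : ℝ) / (‖gradient f x‖ * ‖x‖) : ℝ) : EReal))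
      (normAtTop d))
    (hd' : ∃ c : ℝ, c < 1 ∧
      Tendsto (fun x => ‖gradient φ x‖ / ‖gradient f x‖) (normAtTop d) (nhds c)) :
    (0 : EReal) < Filter.liminf
      (fun x => (((inner ℝ (gradient f x + gradient φ x) x : ℝ)
        / (‖gradient f x + gradient φ x‖ * ‖x‖) : ℝ) : EReal)) (normAtTop d) := by
  obtain ⟨e, he, hf_angle⟩ := EReal.zero_lt_liminf_coe_iff_s3.1 hc
  obtain ⟨c, -, hlim⟩ := hd'
  have hratio : ∀ᶠ x in normAtTop d, ‖gradient φ x‖ / ‖gradient f x‖ ≤ |c| + 1 :=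
    hlim.eventually (ge_mem_nhds ((le_abs_self c).trans_lt (lt_add_one _)))
  have hlarge : ∀ᶠ x in normAtTop d, 2 * ‖gradient φ 0‖ / e ≤ ‖gradient f x‖ :=
    ha.eventually_ge_atTop _
  refine EReal.zero_lt_liminf_coe_iff_s3.2 ⟨e / (2 * (1 + (|c| + 1))), by positivity, ?_⟩
  filter_upwards [hf_angle, hratio, hlarge] with x hfx hxratio hxlarge
  exact div_le_inner_add_div_norm_mul_norm he hfx hxratio ((div_le_iff₀' he).1 hxlarge)
    (hφconv.inner_gradient_zero_le_inner_gradient hφ x)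

theorem stmt3 (d : ℕ) (hd : 1 ≤ d)
    (f φ : EuclideanSpace ℝ (Fin d) → ℝ)
    (hf : Differentiable ℝ f) (hφ : Differentiable ℝ φ)
    (hφconv : ConvexOn ℝ Set.univ φ)
    (ha : Tendsto (fun x => ‖gradient f x‖) (normAtTop d) atTop)
    (hc : (0 : EReal) < Filter.liminf
      (fun x => (((inner ℝ (gradient f x) x : ℝ) / (‖gradient f x‖ * ‖x‖) : ℝ) : EReal))
      (normAtTop d))
    (hd' : ∃ c : ℝ, c < 1 ∧
      Tendsto (fun x => ‖gradient φ x‖ / ‖gradient f x‖) (normAtTop d) (nhds c)) :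
    (0 : EReal) < Filter.liminf
      (fun x => (((inner ℝ (gradient f x + gradient φ x) x : ℝ)
        / (‖gradient f x + gradient φ x‖ * ‖x‖) : ℝ) : EReal)) (normAtTop d) :=
  stmt3_general d f φ hφ hφconv ha hc hd'
end

section
/- Let (E, 𝓔) be a measurable space, let μ be a σ-finite measure on E, and let S : E → E be a measurable involution (S ∘ S = id) that preserves μ (the pushforward of μ under S equals μ). Let π : E → [0, ∞) be a measurable density with ∫ π dμ = 1, and define the acceptance probability α(z) = min{1, π(S z)/π(z)} when π(z) > 0 and α(z) = 1 when π(z) = 0. Define the Markov kernel P(z, ·) = α(z)·δ_{S(z)} + (1 − α(z))·δ_z, where δ_w denotes the Dirac measure at w. Then the probability measure ν with density π with respect to μ is invariant for P: for every measurable set A ⊆ E, ∫ P(z, A) π(z) dμ(z) = ν(A). -/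
open MeasureTheory
open scoped ENNReal

theorem stmt8 {E : Type*} [MeasurableSpace E] (μ : Measure E) [SigmaFinite μ]
    (S : E → E) (hSmeas : Measurable S) (hSinv : S ∘ S = id)
    (hSpres : μ.map S = μ)
    (π : E → ℝ) (hπmeas : Measurable π) (hπ0 : ∀ z, 0 ≤ π z)
    (hπ1 : ∫ z, π z ∂μ = 1)
    (α : E → ℝ)
    (hα : ∀ z, α z = if π z = 0 then 1 else min 1 (π (S z) / π z))
    (ν : Measure E) (hν : ν = μ.withDensity (fun z => ENNReal.ofReal (π z)))
    (P : E → Measure E)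
    (hP : ∀ z, P z = ENNReal.ofReal (α z) • Measure.dirac (S z)
        + ENNReal.ofReal (1 - α z) • Measure.dirac z) :
    ∀ A : Set E, MeasurableSet A → ∫⁻ z, P z A ∂ν = ν A := by
  intro A hA
  set f : E → ℝ≥0∞ := fun z => ENNReal.ofReal (min (π z) (π (S z))) with hf
  have hπS : Measurable fun z => π (S z) := hπmeas.comp hSmeas
  have hfmeas : Measurable f := (hπmeas.min hπS).ennreal_ofReal
  have hαeq : α = fun z => if π z = 0 then (1:ℝ) else min 1 (π (S z) / π z) := funext hα
  have hαmeas : Measurable α := by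
    rw [hαeq]
    exact Measurable.ite (hπmeas (measurableSet_singleton 0)) measurable_const
      (measurable_const.min (hπS.div hπmeas))
  -- P z A in explicit form
  have hPA : ∀ z, P z A = ENNReal.ofReal (α z) * A.indicator 1 (S z)
      + ENNReal.ofReal (1 - α z) * A.indicator 1 z := by
    intro z
    rw [hP z]
    simp [Measure.dirac_apply' _ hA]
  have hPAmeas : Measurable fun z => P z A := by
    simp only [hPA]
    exact ((hαmeas.ennreal_ofReal).mul ((measurable_one.indicator hA).comp hSmeas)).add
      (((measurable_const.sub hαmeas).ennreal_ofReal).mul (measurable_one.indicator hA))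
  -- key pointwise identities
  have hkey1 : ∀ z, ENNReal.ofReal (π z) * ENNReal.ofReal (α z) = f z := by
    intro z
    rw [← ENNReal.ofReal_mul (hπ0 z), hf]
    congr 1
    by_cases h : π z = 0
    · simp [hα z, h, min_eq_left (hπ0 (S z))]
    · have hpos : 0 < π z := lt_of_le_of_ne (hπ0 z) (Ne.symm h)
      rw [hα z, if_neg h, mul_min_of_nonneg _ _ (hπ0 z), mul_one, mul_comm,
        div_mul_cancel₀ _ h]
  have hkey2 : ∀ z, ENNReal.ofReal (π z) * ENNReal.ofReal (1 - α z)
      = ENNReal.ofReal (π z) - f z := by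
    intro z
    rw [← ENNReal.ofReal_mul (hπ0 z), hf,
      ← ENNReal.ofReal_sub _ (le_min (hπ0 z) (hπ0 (S z)))]
    congr 1
    by_cases h : π z = 0
    · simp [hα z, h, min_eq_left (hπ0 (S z))]
    · rw [hα z, if_neg h, mul_sub, mul_one, mul_min_of_nonneg _ _ (hπ0 z), mul_one,
        mul_comm, div_mul_cancel₀ _ h]
  have hkey : ∀ z, ENNReal.ofReal (π z) * P z A
      = f z * A.indicator 1 (S z) + (ENNReal.ofReal (π z) - f z) * A.indicator 1 z := by
    intro z
    rw [hPA z, mul_add, ← mul_assoc, ← mul_assoc, hkey1, hkey2]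
  -- integrability facts
  have hπint : Integrable π μ := by
    by_contra h
    rw [integral_undef h] at hπ1
    exact one_ne_zero hπ1.symm
  have hπlint : ∫⁻ z, ENNReal.ofReal (π z) ∂μ = 1 := by
    rw [← ofReal_integral_eq_lintegral_ofReal hπint (ae_of_all _ hπ0), hπ1,
      ENNReal.ofReal_one]
  have hind_le : ∀ z, (A.indicator (1 : E → ℝ≥0∞) z) ≤ 1 := by
    intro z; by_cases h : z ∈ A <;> simp [h]
  have hind_ne_top : ∀ z, (A.indicator (1 : E → ℝ≥0∞) z) ≠ ⊤ := by
    intro z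
    exact ne_top_of_le_ne_top ENNReal.one_ne_top (hind_le z)
  have hfle : ∀ z, f z ≤ ENNReal.ofReal (π z) := fun z =>
    ENNReal.ofReal_le_ofReal (min_le_left _ _)
  have hmeasfi : Measurable fun z => f z * A.indicator 1 z :=
    hfmeas.mul (measurable_one.indicator hA)
  have hmeasπi : Measurable fun z => ENNReal.ofReal (π z) * A.indicator 1 z :=
    (hπmeas.ennreal_ofReal).mul (measurable_one.indicator hA)
  have hle_int : ∀ z, f z * A.indicator 1 z ≤ ENNReal.ofReal (π z) * A.indicator 1 z :=
    fun z => mul_le_mul_left (hfle z) _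
  have hfi_ne_top : ∫⁻ z, f z * A.indicator 1 z ∂μ ≠ ⊤ := by
    have : ∫⁻ z, f z * A.indicator 1 z ∂μ ≤ ∫⁻ z, ENNReal.ofReal (π z) ∂μ := by
      apply lintegral_mono
      intro z
      calc f z * A.indicator 1 z ≤ ENNReal.ofReal (π z) * 1 :=
            mul_le_mul' (hfle z) (hind_le z)
        _ = ENNReal.ofReal (π z) := mul_one _
    rw [hπlint] at this
    exact ne_top_of_le_ne_top ENNReal.one_ne_top this
  -- change of variables: the first integral equals ∫ f·1_A
  have hfS : ∀ z, f (S z) = f z := by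
    intro z
    have : S (S z) = z := congrFun hSinv z
    simp [hf, this, min_comm]
  have hcov : ∫⁻ z, f z * A.indicator 1 (S z) ∂μ = ∫⁻ z, f z * A.indicator 1 z ∂μ := by
    have h1 : ∀ z, f z * A.indicator 1 (S z) = (fun w => f w * A.indicator 1 w) (S z) := by
      intro z; simp only [hfS]
    calc ∫⁻ z, f z * A.indicator 1 (S z) ∂μ
        = ∫⁻ z, (fun w => f w * A.indicator 1 w) (S z) ∂μ := by simp only [h1]
      _ = ∫⁻ w, f w * A.indicator 1 w ∂(μ.map S) := (lintegral_map hmeasfi hSmeas).symm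
      _ = ∫⁻ w, f w * A.indicator 1 w ∂μ := by rw [hSpres]
  -- main computation
  have hsub : ∀ z, (ENNReal.ofReal (π z) - f z) * A.indicator 1 z
      = ENNReal.ofReal (π z) * A.indicator 1 z - f z * A.indicator 1 z := by
    intro z
    exact ENNReal.sub_mul (fun _ _ => hind_ne_top z)
  calc ∫⁻ z, P z A ∂ν
      = ∫⁻ z, ENNReal.ofReal (π z) * P z A ∂μ := by
        rw [hν, lintegral_withDensity_eq_lintegral_mul μ hπmeas.ennreal_ofReal hPAmeas]
        rfl
    _ = ∫⁻ z, (f z * A.indicator 1 (S z)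
          + (ENNReal.ofReal (π z) - f z) * A.indicator 1 z) ∂μ := by
        simp only [hkey]
    _ = ∫⁻ z, f z * A.indicator 1 (S z) ∂μ
          + ∫⁻ z, (ENNReal.ofReal (π z) - f z) * A.indicator 1 z ∂μ := by
        exact lintegral_add_left (hfmeas.mul ((measurable_one.indicator hA).comp hSmeas)) _
    _ = ∫⁻ z, f z * A.indicator 1 z ∂μ
          + (∫⁻ z, ENNReal.ofReal (π z) * A.indicator 1 z ∂μ
            - ∫⁻ z, f z * A.indicator 1 z ∂μ) := by
        rw [hcov]
        congr 1
        simp only [hsub]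
        exact lintegral_sub hmeasfi hfi_ne_top (ae_of_all _ hle_int)
    _ = ∫⁻ z, ENNReal.ofReal (π z) * A.indicator 1 z ∂μ := by
        exact add_tsub_cancel_of_le (lintegral_mono hle_int)
    _ = ν A := by
        rw [hν, withDensity_apply _ hA]
        have h2 : ∀ z, ENNReal.ofReal (π z) * A.indicator 1 z
            = A.indicator (fun w => ENNReal.ofReal (π w)) z := by
          intro z; by_cases h : z ∈ A <;> simp [h]
        simp only [h2]
        exact lintegral_indicator hA _
end
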